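/- Let W₁ : ℝ → ℝ be defined by W₁(y) = e^{−y²/4} − (y/2)∫_y^∞ e^{−ζ²/4} dζ, and set F(y) = (W₁′(y))² − W₁(y)W₁″(y). Then F′(y) < 0 for all y > 0, F(0) = (1/2)(π/2 − 1) > 0, and F(y) → 0 as y → ∞; consequently F(y) > 0 for all y > 0, and hence (W₁/W₁′)′(y) = F(y)/(W₁′(y))² > 0 for all y > 0. -/

import Mathlib

set_option autoImplicit false

open Set Filter

/-- The (extended) function `W₁(y) = e^{-y²/4} - (y/2) ∫_y^∞ e^{-ζ²/4} dζ`. -/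
noncomputable def W1ext (y : ℝ) : ℝ :=
  Real.exp (-y ^ 2 / 4) - y / 2 * ∫ ζ in Ioi y, Real.exp (-ζ ^ 2 / 4)

/-- The Wronskian-type expression `F = (W₁')² - W₁·W₁''`. -/
noncomputable def F16 (y : ℝ) : ℝ :=
  (deriv W1ext y) ^ 2 - W1ext y * deriv (deriv W1ext) y

/-!
With `g(ζ) = e^{-ζ²/4}` and its tail integral `I(y) = ∫_y^∞ g`, one has `W₁ = g - (y/2) I`,
`W₁' = -I/2` and `W₁'' = g/2`, so `F' = W₁'W₁'' - W₁W₁''' = g · (y g/4 - (2 + y²) I/8)`.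
Hence `F' < 0` is the Mills-ratio bound `I(y) > 2y g(y)/(y² + 2)`, obtained by integrating
`g + (2ζ g/(ζ² + 2))' = 8 g/(ζ² + 2)² > 0` over `(y, ∞)`. The opposite bound `I(y) ≤ 2 g(y)/y`,
from `g ≤ ζ g/y` on `(y, ∞)`, gives `F → 0`; a strictly decreasing function with limit `0` is
positive.
-/

open MeasureTheory Real

theorem StrictAnti.lt_of_tendsto_atTop {α β : Type*} [PartialOrder α] [IsDirectedOrder α]
    [NoMaxOrder α] [TopologicalSpace β] [Preorder β] [OrderClosedTopology β] {f : α → β} {a : β}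
    (hf : StrictAnti f) (ha : Tendsto f atTop (nhds a)) (b : α) : a < f b :=
  let ⟨c, hbc⟩ := exists_gt b
  (hf.antitone.le_of_tendsto ha c).trans_lt (hf hbc)

theorem hasDerivAt_integral_Ioi {f : ℝ → ℝ} (hf : Integrable f) (hc : Continuous f) (y : ℝ) :
    HasDerivAt (fun x => ∫ t in Ioi x, f t) (-f y) y := by
  have hsplit : (fun x => ∫ t in Ioi x, f t) =
      fun x => (∫ t in Ioi y, f t) - ∫ t in y..x, f t := funext fun x => by
    rw [← intervalIntegral.integral_Ioi_sub_Ioi' hf.integrableOn hf.integrableOn]; ring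
  rw [hsplit]
  exact (intervalIntegral.integral_hasDerivAt_right hf.intervalIntegrable
    (hc.stronglyMeasurableAtFilter _ _) hc.continuousAt).const_sub _

theorem setIntegral_Ioi_pos {f : ℝ → ℝ} {y : ℝ} (hf : IntegrableOn f (Ioi y))
    (hpos : ∀ x ∈ Ioi y, 0 < f x) : 0 < ∫ x in Ioi y, f x := by
  rw [setIntegral_pos_iff_support_of_nonneg_ae
    ((ae_restrict_iff' measurableSet_Ioi).2 (.of_forall fun x hx => (hpos x hx).le)) hf,
    inter_eq_right.2 (show Ioi y ⊆ f.support from fun x hx => (hpos x hx).ne')]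
  simp

noncomputable def gaussian (ζ : ℝ) : ℝ := exp (-ζ ^ 2 / 4)

theorem gaussian_eq_exp_neg_mul_sq : gaussian = fun ζ => exp (-(1 / 4) * ζ ^ 2) :=
  funext fun ζ => by rw [gaussian]; ring_nf

theorem gaussian_zero : gaussian 0 = 1 := by
  simp [gaussian]

theorem gaussian_pos (ζ : ℝ) : 0 < gaussian ζ := exp_pos _

theorem continuous_gaussian : Continuous gaussian := by
  unfold gaussian; fun_prop

theorem integrable_gaussian : Integrable gaussian :=
  gaussian_eq_exp_neg_mul_sq ▸ integrable_exp_neg_mul_sq (by norm_num)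

theorem hasDerivAt_gaussian (y : ℝ) : HasDerivAt gaussian (-(y / 2) * gaussian y) y := by
  have hexp : HasDerivAt (fun ζ : ℝ => -ζ ^ 2 / 4) (-(y / 2)) y := by
    simpa using ((hasDerivAt_pow 2 y).neg.div_const 4).congr_deriv (by ring)
  exact hexp.exp.congr_deriv (by rw [gaussian]; ring)

theorem tendsto_gaussian_atTop : Tendsto gaussian atTop (nhds 0) := by
  have hexp : Tendsto (fun ζ : ℝ => -ζ ^ 2 / 4) atTop atBot := by
    simpa only [neg_div, Function.comp_def] using tendsto_neg_atTop_atBot.comp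
      ((tendsto_pow_atTop two_ne_zero).atTop_div_const (by norm_num : (0 : ℝ) < 4))
  exact tendsto_exp_atBot.comp hexp

noncomputable def gaussianTail (y : ℝ) : ℝ := ∫ ζ in Ioi y, gaussian ζ

theorem hasDerivAt_gaussianTail (y : ℝ) : HasDerivAt gaussianTail (-gaussian y) y :=
  hasDerivAt_integral_Ioi integrable_gaussian continuous_gaussian y

theorem gaussianTail_pos (y : ℝ) : 0 < gaussianTail y :=
  setIntegral_Ioi_pos integrable_gaussian.integrableOn fun ζ _ => gaussian_pos ζ

theorem gaussianTail_zero : gaussianTail 0 = √π := by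
  rw [gaussianTail, gaussian_eq_exp_neg_mul_sq, integral_gaussian_Ioi,
    show π / (1 / 4) = 2 ^ 2 * π by ring, sqrt_mul (by norm_num), sqrt_sq (by norm_num)]
  ring

theorem integrable_mul_gaussian : Integrable fun ζ => ζ * gaussian ζ :=
  gaussian_eq_exp_neg_mul_sq ▸ integrable_mul_exp_neg_mul_sq (by norm_num)

theorem integral_Ioi_mul_gaussian (y : ℝ) : ∫ ζ in Ioi y, ζ * gaussian ζ = 2 * gaussian y := by
  rw [integral_Ioi_of_hasDerivAt_of_tendsto' (f := fun ζ => -2 * gaussian ζ)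
    (fun ζ _ => ((hasDerivAt_gaussian ζ).const_mul (-2)).congr_deriv (by ring))
    integrable_mul_gaussian.integrableOn (by simpa using tendsto_gaussian_atTop.const_mul (-2))]
  ring

theorem gaussianTail_le {y : ℝ} (hy : 0 < y) : gaussianTail y ≤ 2 / y * gaussian y :=
  calc gaussianTail y ≤ ∫ ζ in Ioi y, ζ * gaussian ζ / y := by
        refine setIntegral_mono_on integrable_gaussian.integrableOn
          (integrable_mul_gaussian.div_const y).integrableOn measurableSet_Ioi fun ζ hζ => ?_
        have := gaussian_pos ζ
        rw [le_div_iff₀ hy]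
        nlinarith [mem_Ioi.1 hζ]
    _ = 2 / y * gaussian y := by
        rw [integral_div, integral_Ioi_mul_gaussian]; ring

theorem tendsto_gaussianTail_atTop : Tendsto gaussianTail atTop (nhds 0) := by
  refine squeeze_zero' (.of_forall fun y => (gaussianTail_pos y).le) ?_
    (by simpa using tendsto_gaussian_atTop.const_mul 2)
  filter_upwards [eventually_ge_atTop 1] with y hy
  calc gaussianTail y ≤ 2 / y * gaussian y := gaussianTail_le (by linarith)
    _ ≤ 2 * gaussian y := by
        gcongr
        · exact (gaussian_pos y).le
        · exact div_le_self (by norm_num) hy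

theorem hasDerivAt_mul_div_sq_add_two_mul_gaussian (y : ℝ) :
    HasDerivAt (fun ζ => 2 * ζ / (ζ ^ 2 + 2) * gaussian ζ)
      ((8 / (y ^ 2 + 2) ^ 2 - 1) * gaussian y) y := by
  have hden : HasDerivAt (fun ζ : ℝ => ζ ^ 2 + 2) (2 * y) y := by
    simpa using (hasDerivAt_pow 2 y).add_const 2
  refine ((((hasDerivAt_id y).const_mul 2).div hden (by positivity)).mul
    (hasDerivAt_gaussian y)).congr_deriv ?_
  simp only [Pi.div_apply, id]
  field_simp
  ring

theorem abs_mul_div_sq_add_two_mul_gaussian_le (ζ : ℝ) :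
    |2 * ζ / (ζ ^ 2 + 2) * gaussian ζ| ≤ gaussian ζ := by
  rw [abs_mul, abs_of_pos (gaussian_pos ζ), abs_div, abs_of_pos (by positivity : 0 < ζ ^ 2 + 2)]
  refine mul_le_of_le_one_left (gaussian_pos ζ).le ((div_le_one (by positivity)).2 ?_)
  rw [abs_le]
  constructor <;> nlinarith [sq_nonneg (ζ - 1), sq_nonneg (ζ + 1)]

theorem mul_div_sq_add_two_mul_gaussian_lt_gaussianTail (y : ℝ) :
    2 * y / (y ^ 2 + 2) * gaussian y < gaussianTail y := by
  have hint : IntegrableOn (fun ζ => (8 / (ζ ^ 2 + 2) ^ 2 - 1) * gaussian ζ) (Ioi y) := by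
    refine (integrable_gaussian.bdd_mul (f := fun ζ => 8 / (ζ ^ 2 + 2) ^ 2 - 1) (c := 1)
      ((continuous_const.div (by fun_prop) fun ζ => by positivity).sub
        continuous_const).aestronglyMeasurable (.of_forall fun ζ => ?_)).integrableOn
    have : 8 / (ζ ^ 2 + 2) ^ 2 ≤ 2 := by
      rw [div_le_iff₀ (by positivity)]; nlinarith [sq_nonneg ζ, sq_nonneg (ζ ^ 2)]
    rw [norm_eq_abs, abs_le]
    constructor <;> nlinarith [(by positivity : 0 < 8 / (ζ ^ 2 + 2) ^ 2)]
  have hftc := integral_Ioi_of_hasDerivAt_of_tendsto'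
    (fun ζ _ => hasDerivAt_mul_div_sq_add_two_mul_gaussian ζ) hint
    (squeeze_zero_norm abs_mul_div_sq_add_two_mul_gaussian_le tendsto_gaussian_atTop)
  have hpos : 0 < ∫ ζ in Ioi y, (gaussian ζ + (8 / (ζ ^ 2 + 2) ^ 2 - 1) * gaussian ζ) :=
    setIntegral_Ioi_pos (integrable_gaussian.integrableOn.add hint) fun ζ _ => by
      have := gaussian_pos ζ
      calc (0 : ℝ) < 8 / (ζ ^ 2 + 2) ^ 2 * gaussian ζ := by positivity
        _ = _ := by ring
  rw [integral_add integrable_gaussian.integrableOn hint, hftc] at hpos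
  rw [gaussianTail]
  linarith

theorem W1ext_eq (y : ℝ) : W1ext y = gaussian y - y / 2 * gaussianTail y := rfl

theorem hasDerivAt_W1ext (y : ℝ) : HasDerivAt W1ext (-(1 / 2) * gaussianTail y) y :=
  ((hasDerivAt_gaussian y).sub (((hasDerivAt_id y).div_const 2).mul
    (hasDerivAt_gaussianTail y))).congr_deriv (by simp only [id]; ring)

theorem deriv_W1ext : deriv W1ext = fun y => -(1 / 2) * gaussianTail y :=
  funext fun y => (hasDerivAt_W1ext y).deriv

theorem deriv_W1ext_neg (y : ℝ) : deriv W1ext y < 0 := by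
  rw [deriv_W1ext]; linarith [gaussianTail_pos y]

theorem hasDerivAt_deriv_W1ext (y : ℝ) : HasDerivAt (deriv W1ext) (1 / 2 * gaussian y) y := by
  rw [deriv_W1ext]
  exact ((hasDerivAt_gaussianTail y).const_mul _).congr_deriv (by ring)

theorem deriv_deriv_W1ext : deriv (deriv W1ext) = fun y => 1 / 2 * gaussian y :=
  funext fun y => (hasDerivAt_deriv_W1ext y).deriv

theorem F16_eq (y : ℝ) :
    F16 y = gaussianTail y ^ 2 / 4 - (gaussian y - y / 2 * gaussianTail y) * gaussian y / 2 := by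
  rw [F16, deriv_deriv_W1ext, deriv_W1ext, W1ext_eq]; ring

theorem hasDerivAt_F16 (y : ℝ) :
    HasDerivAt F16 (gaussian y * (y / 4 * gaussian y - (2 + y ^ 2) / 8 * gaussianTail y)) y := by
  have hW'' : HasDerivAt (deriv (deriv W1ext)) (1 / 2 * (-(y / 2) * gaussian y)) y := by
    rw [deriv_deriv_W1ext]; exact (hasDerivAt_gaussian y).const_mul _
  refine (((hasDerivAt_deriv_W1ext y).pow 2).sub ((hasDerivAt_W1ext y).mul hW'')).congr_deriv ?_
  rw [deriv_deriv_W1ext]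
  simp only [deriv_W1ext, W1ext_eq]
  ring

theorem deriv_F16_neg (y : ℝ) : deriv F16 y < 0 := by
  rw [(hasDerivAt_F16 y).deriv]
  have hlower := mul_lt_mul_of_pos_left (mul_div_sq_add_two_mul_gaussian_lt_gaussianTail y)
    (by positivity : (0 : ℝ) < (2 + y ^ 2) / 8)
  have hcancel : (2 + y ^ 2) / 8 * (2 * y / (y ^ 2 + 2) * gaussian y) = y / 4 * gaussian y := by
    field_simp; ring
  exact mul_neg_of_pos_of_neg (gaussian_pos y) (by linarith)

theorem F16_zero : F16 0 = 1 / 2 * (π / 2 - 1) := by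
  rw [F16_eq, gaussianTail_zero, sq_sqrt pi_pos.le, gaussian_zero]
  ring

theorem tendsto_F16_atTop : Tendsto F16 atTop (nhds 0) := by
  have hcross : Tendsto (fun y => y * gaussianTail y * gaussian y) atTop (nhds 0) := by
    refine squeeze_zero' ?_ ?_ (by simpa using (tendsto_gaussian_atTop.pow 2).const_mul 2)
    · filter_upwards [eventually_ge_atTop 0] with y hy
      have := gaussianTail_pos y
      have := gaussian_pos y
      positivity
    · filter_upwards [eventually_gt_atTop 0] with y hy
      calc y * gaussianTail y * gaussian y ≤ y * (2 / y * gaussian y) * gaussian y := by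
            gcongr
            · exact (gaussian_pos y).le
            · exact gaussianTail_le hy
        _ = 2 * gaussian y ^ 2 := by field_simp
  have hlim : Tendsto (fun y => gaussianTail y ^ 2 / 4 - gaussian y ^ 2 / 2
      + y * gaussianTail y * gaussian y / 4) atTop (nhds 0) := by
    simpa using (((tendsto_gaussianTail_atTop.pow 2).div_const 4).sub
      ((tendsto_gaussian_atTop.pow 2).div_const 2)).add (hcross.div_const 4)
  exact hlim.congr fun y => by rw [F16_eq]; ring

theorem F16_pos (y : ℝ) : 0 < F16 y :=
  (strictAnti_of_deriv_neg deriv_F16_neg).lt_of_tendsto_atTop tendsto_F16_atTop y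

theorem hasDerivAt_W1ext_div_deriv (y : ℝ) :
    HasDerivAt (fun z => W1ext z / deriv W1ext z) (F16 y / deriv W1ext y ^ 2) y := by
  refine ((hasDerivAt_W1ext y).div (hasDerivAt_deriv_W1ext y)
    (deriv_W1ext_neg y).ne).congr_deriv ?_
  rw [F16, deriv_deriv_W1ext]
  simp only [deriv_W1ext]
  ring

/-- **Monotonicity of the ratio `W₁/W₁'`.**
`F' < 0` on `(0,∞)`, `F(0) = (1/2)(Real.pi/2 - 1) > 0`, `F → 0` at `∞`; hence `F > 0` on
`(0,∞)` and `(W₁/W₁')' = F/(W₁')² > 0` on `(0,∞)`. -/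
theorem F16_positive_and_ratio_increasing :
    (∀ y : ℝ, 0 < y → deriv F16 y < 0) ∧
    F16 0 = 1 / 2 * (Real.pi / 2 - 1) ∧
    0 < F16 0 ∧
    Tendsto F16 atTop (nhds 0) ∧
    (∀ y : ℝ, 0 < y → 0 < F16 y) ∧
    (∀ y : ℝ, 0 < y →
      deriv (fun z => W1ext z / deriv W1ext z) y = F16 y / (deriv W1ext y) ^ 2 ∧
      0 < deriv (fun z => W1ext z / deriv W1ext z) y) := by
  refine ⟨fun y _ => deriv_F16_neg y, F16_zero, F16_pos 0, tendsto_F16_atTop,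
    fun y _ => F16_pos y, fun y _ => ?_⟩
  rw [(hasDerivAt_W1ext_div_deriv y).deriv]
  exact ⟨rfl, div_pos (F16_pos y) (sq_pos_of_neg (deriv_W1ext_neg y))⟩
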